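/- arXiv:1904.03967 — 3 statements merged into one kernel-verified Lean document; each statement's English description precedes it below -/
import Mathlib

section
/- Let X₁, X₂, …, X_q be Hausdorff topological spaces and e₁, e₂, …, e_q open cells in X₁, X₂, …, X_q of dimensions d₁, …, d_q respectively. Then e₁ × e₂ × ⋯ × e_q is an open cell of dimension d₁ + d₂ + ⋯ + d_q in the product space X₁ × X₂ × ⋯ × X_q, and its boundary is ∂(e₁ × ⋯ × e_q) = ⋃_{i=1}^q closure(e₁) × ⋯ × closure(e_{i−1}) × ∂e_i × closure(e_{i+1}) × ⋯ × closure(e_q). -/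
/-!
The product of characteristic maps `fᵢ : D^{dᵢ} → Xᵢ` is a characteristic map on `∏ᵢ D^{dᵢ}`,
which is the closed unit ball of `∏ᵢ ℝ^{dᵢ}` for the sup norm. That ball is a convex body in a
space of dimension `Σᵢ dᵢ`, so gauge rescaling gives a homeomorphism with the Euclidean ball
carrying open ball to open ball. The boundary formula is pure set theory once closure is known
to commute with products: a point of `∏ᵢ closure eᵢ` misses `∏ᵢ eᵢ` iff some coordinate lies in
`∂eᵢ`.
-/

open scoped InnerProductSpace

noncomputable section

/-- `e` is an open cell in `X` with characteristic map `f : Dⁿ → X`: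
`f` is continuous on the closed unit ball `Dⁿ`, and restricts to a homeomorphism
(i.e. a topological embedding) of the open unit ball onto `e`. -/
def IsCellMap {X : Type*} [TopologicalSpace X] {n : ℕ}
    (f : EuclideanSpace ℝ (Fin n) → X) (e : Set X) : Prop :=
  ContinuousOn f (Metric.closedBall 0 1) ∧
  Topology.IsEmbedding ((Metric.ball (0 : EuclideanSpace ℝ (Fin n)) 1).restrict f) ∧
  f '' Metric.ball 0 1 = e

/-- `e` is an open cell of dimension `n` in `X`. -/
def IsOpenCell {X : Type*} [TopologicalSpace X] (e : Set X) (n : ℕ) : Prop :=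
  ∃ f : EuclideanSpace ℝ (Fin n) → X, IsCellMap f e

open Set Topology Metric

section CellMapOn

variable {Y E X : Type*} [TopologicalSpace Y] [TopologicalSpace E] [TopologicalSpace X]

def IsCellMapOn (f : E → X) (C B : Set E) (e : Set X) : Prop :=
  ContinuousOn f C ∧ IsEmbedding (B.domRestrict f) ∧ f '' B = e

theorem isCellMap_iff_isCellMapOn {n : ℕ} {f : EuclideanSpace ℝ (Fin n) → X} {e : Set X} :
    IsCellMap f e ↔ IsCellMapOn f (closedBall 0 1) (ball 0 1) e :=
  Iff.rfl

theorem IsCellMapOn.comp_homeomorph {f : E → X} {C B : Set E} {e : Set X}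
    (hf : IsCellMapOn f C B e) (Φ : Y ≃ₜ E) : IsCellMapOn (f ∘ Φ) (Φ ⁻¹' C) (Φ ⁻¹' B) e := by
  obtain ⟨hcont, hemb, himage⟩ := hf
  refine ⟨hcont.comp Φ.continuous.continuousOn (mapsTo_preimage _ _), ?_, ?_⟩
  · have hΦ : IsEmbedding ((mapsTo_preimage Φ B).restrict Φ _ _) :=
      (Φ.isEmbedding.comp IsEmbedding.subtypeVal).codRestrict _ _
    exact hemb.comp hΦ
  · rw [image_comp, Φ.image_preimage, himage]

end CellMapOn

theorem Topology.IsEmbedding.domRestrict_univ_pi {ι : Type*} {A Z : ι → Type*}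
    [∀ i, TopologicalSpace (A i)] [∀ i, TopologicalSpace (Z i)] {f : ∀ i, A i → Z i}
    {s : ∀ i, Set (A i)} (hf : ∀ i, IsEmbedding ((s i).domRestrict (f i))) :
    IsEmbedding ((univ.pi s).domRestrict (Pi.map f)) := by
  have hunivPi : IsEmbedding (Equiv.Set.univPi s) :=
    .of_comp
      (continuous_pi fun i => ((continuous_apply i).comp continuous_subtype_val).subtype_mk _)
      (.piMap fun _ => continuous_subtype_val) IsEmbedding.subtypeVal
  exact (IsEmbedding.piMap hf).comp hunivPi

theorem IsCellMapOn.piMap {ι : Type*} {E X : ι → Type*} [∀ i, TopologicalSpace (E i)]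
    [∀ i, TopologicalSpace (X i)] {f : ∀ i, E i → X i} {C B : ∀ i, Set (E i)}
    {e : ∀ i, Set (X i)} (hf : ∀ i, IsCellMapOn (f i) (C i) (B i) (e i)) :
    IsCellMapOn (Pi.map f) (univ.pi C) (univ.pi B) (univ.pi e) := by
  refine ⟨?_, .domRestrict_univ_pi fun i => (hf i).2.1, ?_⟩
  · exact continuousOn_pi.2 fun i =>
      (hf i).1.comp (continuous_apply i).continuousOn fun x hx => hx i (mem_univ i)
  · rw [piMap_image_univ_pi]
    exact pi_congr rfl fun i _ => (hf i).2.2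

theorem exists_homeomorph_preimage_unitBall {E F : Type*} [NormedAddCommGroup E]
    [NormedSpace ℝ E] [FiniteDimensional ℝ E] [NormedAddCommGroup F] [NormedSpace ℝ F]
    [FiniteDimensional ℝ F] (hEF : Module.finrank ℝ E = Module.finrank ℝ F) :
    ∃ Φ : E ≃ₜ F, Φ ⁻¹' closedBall 0 1 = closedBall 0 1 ∧ Φ ⁻¹' ball 0 1 = ball 0 1 := by
  let L : E ≃L[ℝ] F := .ofFinrankEq hEF
  set s : Set E := L ⁻¹' closedBall 0 1
  have hs_int : interior s = L ⁻¹' ball 0 1 := by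
    change interior (L.toHomeomorph ⁻¹' closedBall 0 1) = _
    rw [← L.toHomeomorph.preimage_interior, interior_closedBall _ one_ne_zero]
    rfl
  have hs_closed : IsClosed s := isClosed_closedBall.preimage L.continuous
  obtain ⟨h, h_int, h_closure, -⟩ :=
    exists_homeomorph_image_interior_closure_frontier_eq_unitBall (s := s)
    ((convex_closedBall 0 1).linear_preimage (L : E →ₗ[ℝ] F))
    ⟨0, show (0 : E) ∈ interior s by simp [hs_int]⟩
    (L.toHomeomorph.isCompact_preimage.2 (isCompact_closedBall 0 1)).isBounded
  refine ⟨h.symm.trans L.toHomeomorph, ?_, ?_⟩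
  · change h.symm ⁻¹' s = _
    rw [h.preimage_symm, ← h_closure, hs_closed.closure_eq]
  · change h.symm ⁻¹' (L ⁻¹' ball 0 1) = _
    rw [h.preimage_symm, ← h_int, hs_int]

theorem Set.univ_pi_sdiff_univ_pi {ι : Type*} [DecidableEq ι] {α : ι → Type*}
    (s t : ∀ i, Set (α i)) :
    univ.pi t \ univ.pi s = ⋃ i, univ.pi (Function.update t i (t i \ s i)) := by
  ext x
  simp only [mem_sdiff, mem_univ_pi, mem_iUnion, not_forall]
  constructor
  · rintro ⟨hxt, i, hxs⟩
    refine ⟨i, fun j => ?_⟩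
    rcases eq_or_ne j i with rfl | hji
    · simpa using ⟨hxt j, hxs⟩
    · simpa [hji] using hxt j
  · rintro ⟨i, hx⟩
    have hxi := hx i
    rw [Function.update_self] at hxi
    refine ⟨fun j => ?_, i, hxi.2⟩
    rcases eq_or_ne j i with rfl | hji
    · exact hxi.1
    · simpa [hji] using hx j

theorem isOpenCell_pi_general
    {q : ℕ} (X : Fin q → Type*) [∀ i, TopologicalSpace (X i)]
    (e : ∀ i, Set (X i)) (d : Fin q → ℕ) (he : ∀ i, IsOpenCell (e i) (d i)) :
    IsOpenCell (Set.univ.pi e) (∑ i, d i) ∧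
    closure (Set.univ.pi e) \ Set.univ.pi e =
      ⋃ i : Fin q,
        Set.univ.pi (Function.update (fun j => closure (e j)) i (closure (e i) \ e i)) := by
  refine ⟨?_, by rw [closure_pi_set, univ_pi_sdiff_univ_pi]⟩
  choose f hf using he
  have hprod : IsCellMapOn (Pi.map f) (closedBall 0 1) (ball 0 1) (univ.pi e) := by
    rw [closedBall_pi _ zero_le_one, ball_pi _ one_pos]
    exact .piMap fun i => isCellMap_iff_isCellMapOn.1 (hf i)
  obtain ⟨Φ, hΦ_closedBall, hΦ_ball⟩ :=
    exists_homeomorph_preimage_unitBall (E := EuclideanSpace ℝ (Fin (∑ i, d i)))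
      (F := ∀ i, EuclideanSpace ℝ (Fin (d i))) (by simp [Module.finrank_pi_fintype])
  refine ⟨Pi.map f ∘ Φ, isCellMap_iff_isCellMapOn.2 ?_⟩
  simpa only [hΦ_closedBall, hΦ_ball] using hprod.comp_homeomorph Φ

/-- Lemma 2.8: a finite product of open cells `eᵢ` of dimensions `dᵢ` in Hausdorff spaces
`Xᵢ` is an open cell of dimension `Σᵢ dᵢ` in the product space, with boundary
`⋃ᵢ closure e₁ × ⋯ × ∂eᵢ × ⋯ × closure e_q`. -/
theorem isOpenCell_pi
    {q : ℕ} (X : Fin q → Type*) [∀ i, TopologicalSpace (X i)] [∀ i, T2Space (X i)]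
    (e : ∀ i, Set (X i)) (d : Fin q → ℕ) (he : ∀ i, IsOpenCell (e i) (d i)) :
    IsOpenCell (Set.univ.pi e) (∑ i, d i) ∧
    closure (Set.univ.pi e) \ Set.univ.pi e =
      ⋃ i : Fin q,
        Set.univ.pi (Function.update (fun j => closure (e j)) i (closure (e i) \ e i)) :=
  isOpenCell_pi_general X e d he

end
end

section
/- Let Z be a finite-dimensional completely flagged vector space over a field K, Y a subspace of Z (with the induced complete flag), and X a nonzero subspace of Y. Then (1) the Schubert functions satisfy ω_X^Z = ω_X^Y ∘ ω_Y^Z, and (2) the Schubert symbols satisfy σ_X^Z = σ_Y^Z ∘ σ_X^Y. -/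
noncomputable section

/-- The (1-based) Schubert symbol `σ_X(k) = min { i : dim (X ∩ F i) ≥ k }` of a
subspace `X` relative to a flag `F`. -/
def schubertSigma {K W : Type*} [Ring K] [AddCommGroup W] [Module K W]
    (X : Submodule K W) (F : ℕ → Submodule K W) (k : ℕ) : ℕ :=
  sInf {i : ℕ | k ≤ Module.finrank K ↥(X ⊓ F i)}

/-- The (1-based) Schubert function `ω_X(k) = dim (X ∩ F k)` of a subspace `X`
relative to a flag `F`. -/
def schubertOmega {K W : Type*} [Ring K] [AddCommGroup W] [Module K W]
    (X : Submodule K W) (F : ℕ → Submodule K W) (k : ℕ) : ℕ :=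
  Module.finrank K ↥(X ⊓ F k)

/-- `F` is a complete flag of a finite dimensional space `W`:
`F` is increasing with `dim (F i) = i` for `0 ≤ i ≤ dim W`
(and `F i = W` for `i ≥ dim W`). -/
def IsCompleteFlag (K : Type*) {W : Type*} [Ring K] [AddCommGroup W] [Module K W]
    (F : ℕ → Submodule K W) : Prop :=
  Monotone F ∧ ∀ i, Module.finrank K ↥(F i) = min i (Module.finrank K W)

/-- The complete flag induced on a subspace `Y` of a completely flagged space:
`Y_k = Y ∩ F (σ_Y(k))`. -/
def inducedFlag {K W : Type*} [Ring K] [AddCommGroup W] [Module K W]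
    (Y : Submodule K W) (F : ℕ → Submodule K W) : ℕ → Submodule K W :=
  fun k => Y ⊓ F (schubertSigma Y F k)

/-!
Both identities come from the Galois connection `σ_X(k) ≤ i ↔ k ≤ ω_X(i)`, valid for any
increasing flag as long as `k` is attained by `ω_X`. The induced flag satisfies
`Y_{ω_Y(i)} = Y ∩ W_i`, since `σ_Y(ω_Y(i)) ≤ i` while both spaces have dimension `ω_Y(i)`;
intersecting with `X ≤ Y` gives `ω_X^Y ∘ ω_Y = ω_X`. Chaining the Galois connections for `Y` in
`Z` and `X` in `Y` then shows that `σ_Y(σ_X^Y(k))` and `σ_X(k)` have the same upper bounds.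
-/

theorem IsCompleteFlag.apply_finrank_eq_top {K V : Type*} [DivisionRing K] [AddCommGroup V]
    [Module K V] [FiniteDimensional K V] {F : ℕ → Submodule K V} (hF : IsCompleteFlag K F) :
    F (Module.finrank K V) = ⊤ :=
  Submodule.eq_top_of_finrank_eq <| (hF.2 _).trans (min_self _)

section

variable {K V : Type*} [Ring K] [AddCommGroup V] [Module K V] {F : ℕ → Submodule K V}
  {X : Submodule K V} {k i : ℕ}

theorem schubertSigma_le_of_le_schubertOmega (h : k ≤ schubertOmega X F i) :
    schubertSigma X F k ≤ i :=
  Nat.sInf_le h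

theorem le_schubertOmega_schubertSigma (hk : ∃ n, k ≤ schubertOmega X F n) :
    k ≤ schubertOmega X F (schubertSigma X F k) :=
  Nat.sInf_mem hk

end

section

variable {K V : Type*} [DivisionRing K] [AddCommGroup V] [Module K V] [FiniteDimensional K V]
  {F : ℕ → Submodule K V} {X Y : Submodule K V} {k i : ℕ}

theorem schubertOmega_mono (hF : Monotone F) : Monotone (schubertOmega X F) :=
  fun _ _ h => Submodule.finrank_mono (inf_le_inf_left X (hF h))

theorem schubertSigma_le_iff (hF : Monotone F) (hk : ∃ n, k ≤ schubertOmega X F n) :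
    schubertSigma X F k ≤ i ↔ k ≤ schubertOmega X F i :=
  ⟨fun h => (le_schubertOmega_schubertSigma hk).trans (schubertOmega_mono hF h),
    schubertSigma_le_of_le_schubertOmega⟩

theorem inducedFlag_schubertOmega (hF : Monotone F) (i : ℕ) :
    inducedFlag Y F (schubertOmega Y F i) = Y ⊓ F i := by
  have hσ : schubertSigma Y F (schubertOmega Y F i) ≤ i :=
    schubertSigma_le_of_le_schubertOmega le_rfl
  exact Submodule.eq_of_le_of_finrank_le (inf_le_inf_left Y (hF hσ))
    (le_schubertOmega_schubertSigma ⟨i, le_rfl⟩)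

theorem schubertOmega_inducedFlag_schubertOmega (hF : Monotone F) (hXY : X ≤ Y) (i : ℕ) :
    schubertOmega X (inducedFlag Y F) (schubertOmega Y F i) = schubertOmega X F i := by
  rw [schubertOmega, inducedFlag_schubertOmega hF, ← inf_assoc, inf_eq_left.2 hXY,
    schubertOmega]

theorem schubertOmega_inducedFlag_le (hF : Monotone F) {j : ℕ} (hj : j ≤ schubertOmega Y F i) :
    schubertOmega X (inducedFlag Y F) j ≤ schubertOmega X F i := by
  have hσ : schubertSigma Y F j ≤ i := schubertSigma_le_of_le_schubertOmega hj
  exact Submodule.finrank_mono (inf_le_inf_left X (inf_le_right.trans (hF hσ)))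

theorem schubertSigma_inducedFlag_le_iff (hF : Monotone F) (hXY : X ≤ Y)
    (hk : ∃ n, k ≤ schubertOmega X F n) :
    schubertSigma X (inducedFlag Y F) k ≤ schubertOmega Y F i ↔ k ≤ schubertOmega X F i := by
  obtain ⟨n, hn⟩ := hk
  have hattained : ∃ j, k ≤ schubertOmega X (inducedFlag Y F) j :=
    ⟨schubertOmega Y F n, (schubertOmega_inducedFlag_schubertOmega hF hXY n).symm ▸ hn⟩
  refine ⟨fun h => (le_schubertOmega_schubertSigma hattained).trans
    (schubertOmega_inducedFlag_le hF h), fun h => schubertSigma_le_of_le_schubertOmega ?_⟩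
  rwa [schubertOmega_inducedFlag_schubertOmega hF hXY]

theorem schubertSigma_comp (hF : Monotone F) (hXY : X ≤ Y) (hk : ∃ n, k ≤ schubertOmega X F n) :
    schubertSigma X F k = schubertSigma Y F (schubertSigma X (inducedFlag Y F) k) := by
  obtain ⟨n, hn⟩ := hk
  have hattained : ∃ m, schubertSigma X (inducedFlag Y F) k ≤ schubertOmega Y F m :=
    ⟨n, (schubertSigma_inducedFlag_le_iff hF hXY ⟨n, hn⟩).2 hn⟩
  refine eq_of_forall_ge_iff fun i => ?_
  rw [schubertSigma_le_iff hF ⟨n, hn⟩, schubertSigma_le_iff hF hattained,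
    schubertSigma_inducedFlag_le_iff hF hXY ⟨n, hn⟩]

end

theorem schubert_comp_general
    (K Z : Type*) [Field K] [AddCommGroup Z] [Module K Z] [FiniteDimensional K Z]
    (W : ℕ → Submodule K Z) (hW : IsCompleteFlag K W)
    (Y X : Submodule K Z) (hXY : X ≤ Y) :
    (∀ k ≤ Module.finrank K Z,
        schubertOmega X W k = schubertOmega X (inducedFlag Y W) (schubertOmega Y W k)) ∧
    (∀ k, 1 ≤ k → k ≤ Module.finrank K ↥X →
        schubertSigma X W k = schubertSigma Y W (schubertSigma X (inducedFlag Y W) k)) := by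
  refine ⟨fun k _ => (schubertOmega_inducedFlag_schubertOmega hW.1 hXY k).symm,
    fun k _ hk => schubertSigma_comp hW.1 hXY ⟨Module.finrank K Z, ?_⟩⟩
  rwa [schubertOmega, hW.apply_finrank_eq_top, inf_top_eq]

/-- Lemma 4.3: for a subspace `X ≠ 0` of a subspace `Y` of a finite dimensional
completely flagged space `Z` (with `Y` carrying the induced complete flag), the
Schubert functions satisfy `ω_X^Z = ω_X^Y ∘ ω_Y^Z` and the Schubert symbols satisfy
`σ_X^Z = σ_Y^Z ∘ σ_X^Y`. -/
theorem schubert_comp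
    (K Z : Type*) [Field K] [AddCommGroup Z] [Module K Z] [FiniteDimensional K Z]
    (W : ℕ → Submodule K Z) (hW : IsCompleteFlag K W)
    (Y X : Submodule K Z) (hXY : X ≤ Y) (hX : X ≠ ⊥) :
    (∀ k ≤ Module.finrank K Z,
        schubertOmega X W k = schubertOmega X (inducedFlag Y W) (schubertOmega Y W k)) ∧
    (∀ k, 1 ≤ k → k ≤ Module.finrank K ↥X →
        schubertSigma X W k = schubertSigma Y W (schubertSigma X (inducedFlag Y W) k)) :=
  schubert_comp_general K Z W hW Y X hXY

end
end

section
/- Let n₁ < n₂ < ⋯ < n_q < n_{q+1} be positive integers and for each 1 ≤ i ≤ q let σ_i : {1,…,n_i} → {1,…,n_{i+1}} be a strictly increasing function. Then Σ_{i=1}^q d(σ_i) = Σ_{k=1}^{n₁} (σ_q⋯σ₂σ₁(k) − k) + Σ_{k ∉ Im σ₁} (σ_q⋯σ₃σ₂(k) − k) + ⋯ + Σ_{k ∉ Im σ_{q−2}} (σ_qσ_{q−1}(k) − k) + Σ_{k ∉ Im σ_{q−1}} (σ_q(k) − k), where in the i-th sum k ranges over the elements of {1,…,n_i} not in the image of σ_{i−1},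 and d(σ) = Σ_k (σ(k) − k). -/
/-!
With `D(f, s) = Σ_{k ∈ s} (f k - k)`, the displacement is a cocycle: `D(g ∘ f, s) = D(f, s) + D(g, f(s))`
for `f` injective on `s`. Splitting `{1,…,n_{i+1}}` into the image of `σ_i` and its complement and
taking `g = σ_q ⋯ σ_{i+1}` turns `d(σ_i)` into the difference of consecutive terms of the right-hand
side, so the sum telescopes.
-/

noncomputable section

/-- `compSeq σ i j = σ (i+j) ∘ ⋯ ∘ σ (i+1) ∘ σ i`, the composition of a chain of
functions; in particular `compSeq σ i (q - i) = σ q ∘ ⋯ ∘ σ i` when `i ≤ q`. -/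
def compSeq (σ : ℕ → ℕ → ℕ) (i : ℕ) : ℕ → ℕ → ℕ
  | 0 => σ i
  | (j + 1) => σ (i + j + 1) ∘ compSeq σ i j

open Finset

def displacement (f : ℕ → ℕ) (s : Finset ℕ) : ℤ := ∑ k ∈ s, ((f k : ℤ) - k)

theorem displacement_comp_add_displacement_sdiff_image {f g : ℕ → ℕ} {s t : Finset ℕ}
    (hf : Set.InjOn f s) (hst : Set.MapsTo f s t) :
    displacement (g ∘ f) s + displacement g (t \ s.image f) =
      displacement f s + displacement g t := by
  have himage : displacement g (s.image f) = ∑ k ∈ s, ((g (f k) : ℤ) - f k) :=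
    sum_image fun _ hx _ hy hxy => hf hx hy hxy
  have hsplit : displacement g (t \ s.image f) + displacement g (s.image f) = displacement g t :=
    sum_sdiff (image_subset_iff.2 fun _ hx => hst hx)
  have hcocycle : displacement (g ∘ f) s = displacement f s + ∑ k ∈ s, ((g (f k) : ℤ) - f k) := by
    rw [displacement, displacement, ← sum_add_distrib]
    exact sum_congr rfl fun k _ => by rw [Function.comp_apply]; ring
  linarith

theorem compSeq_succ_left (σ : ℕ → ℕ → ℕ) (i j : ℕ) :
    compSeq σ i (j + 1) = compSeq σ (i + 1) j ∘ σ i := by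
  induction j with
  | zero => rfl
  | succ j ih =>
    rw [compSeq, ih, compSeq, show i + (j + 1) + 1 = i + 1 + j + 1 by omega]
    rfl

theorem compSeq_sub_eq_comp (σ : ℕ → ℕ → ℕ) {a q : ℕ} (h : a < q) :
    compSeq σ a (q - a) = compSeq σ (a + 1) (q - (a + 1)) ∘ σ a := by
  rw [← compSeq_succ_left, show q - (a + 1) + 1 = q - a by omega]

theorem sum_displacement_Icc_eq {q a : ℕ} (ha : a ≤ q) (n : ℕ → ℕ) (σ : ℕ → ℕ → ℕ)
    (hσinj : ∀ i ∈ Icc a q, Set.InjOn (σ i) (Set.Icc 1 (n i)))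
    (hσmaps : ∀ i ∈ Icc a q, Set.MapsTo (σ i) (Set.Icc 1 (n i)) (Set.Icc 1 (n (i + 1)))) :
    ∑ i ∈ Icc a q, displacement (σ i) (Icc 1 (n i)) =
      displacement (compSeq σ a (q - a)) (Icc 1 (n a)) +
        ∑ i ∈ Ioc a q, displacement (compSeq σ i (q - i))
          (Icc 1 (n i) \ (Icc 1 (n (i - 1))).image (σ (i - 1))) := by
  induction ha using Nat.decreasingInduction with
  | self => simp [compSeq]
  | of_succ a ha ih =>
    have hsub : Icc (a + 1) q ⊆ Icc a q := Icc_subset_Icc_left (Nat.le_succ a)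
    have ha_mem : a ∈ Icc a q := left_mem_Icc.2 ha.le
    have hstep := displacement_comp_add_displacement_sdiff_image
      (g := compSeq σ (a + 1) (q - (a + 1)))
      (s := Icc 1 (n a)) (t := Icc 1 (n (a + 1)))
      (by simpa using hσinj a ha_mem) (by simpa using hσmaps a ha_mem)
    rw [← compSeq_sub_eq_comp σ ha] at hstep
    rw [Icc_eq_cons_Ioc ha.le, sum_cons, ← Icc_add_one_left_eq_Ioc,
      ih (fun i hi => hσinj i (hsub hi)) (fun i hi => hσmaps i (hsub hi)),
      Icc_eq_cons_Ioc (show a + 1 ≤ q from ha), sum_cons, Nat.add_sub_cancel]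
    linarith

theorem dSigma_sum_decomposition_general
    (q : ℕ) (hq : 1 ≤ q) (n : ℕ → ℕ) (σ : ℕ → ℕ → ℕ)
    (hσmono : ∀ i ∈ Finset.Icc 1 q, StrictMonoOn (σ i) (Set.Icc 1 (n i)))
    (hσmaps : ∀ i ∈ Finset.Icc 1 q, Set.MapsTo (σ i) (Set.Icc 1 (n i)) (Set.Icc 1 (n (i + 1)))) :
    ∑ i ∈ Finset.Icc 1 q, ∑ k ∈ Finset.Icc 1 (n i), ((σ i k : ℤ) - (k : ℤ)) =
      ∑ i ∈ Finset.Icc 1 q,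
        ∑ k ∈ (if i = 1 then Finset.Icc 1 (n 1)
            else Finset.Icc 1 (n i) \ (Finset.Icc 1 (n (i - 1))).image (σ (i - 1))),
          ((compSeq σ i (q - i) k : ℤ) - (k : ℤ)) := by
  have key := sum_displacement_Icc_eq hq n σ (fun i hi => (hσmono i hi).injOn) hσmaps
  refine key.trans ?_
  rw [Icc_eq_cons_Ioc hq, sum_cons, if_pos rfl]
  exact congrArg _ (sum_congr rfl fun i hi => by rw [if_neg (mem_Ioc.1 hi).1.ne']; rfl)

/-- Lemma 5.1: for strictly increasing `σᵢ : {1,…,nᵢ} → {1,…,n_{i+1}}` (`1 ≤ i ≤ q`),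
`Σ_{i=1}^q d(σᵢ) = Σ_{k=1}^{n₁} (σ_q⋯σ₁(k) − k) + Σ_{i=2}^{q} Σ_{k ∈ {1,…,nᵢ} ∖ Im σ_{i−1}}
(σ_q⋯σᵢ(k) − k)`, where `d(σ) = Σ_k (σ(k) − k)`. -/
theorem dSigma_sum_decomposition
    (q : ℕ) (hq : 1 ≤ q) (n : ℕ → ℕ) (σ : ℕ → ℕ → ℕ)
    (hn1 : 1 ≤ n 1)
    (hn : ∀ i ∈ Finset.Icc 1 q, n i < n (i + 1))
    (hσmono : ∀ i ∈ Finset.Icc 1 q, StrictMonoOn (σ i) (Set.Icc 1 (n i)))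
    (hσmaps : ∀ i ∈ Finset.Icc 1 q, Set.MapsTo (σ i) (Set.Icc 1 (n i)) (Set.Icc 1 (n (i + 1)))) :
    ∑ i ∈ Finset.Icc 1 q, ∑ k ∈ Finset.Icc 1 (n i), ((σ i k : ℤ) - (k : ℤ)) =
      ∑ i ∈ Finset.Icc 1 q,
        ∑ k ∈ (if i = 1 then Finset.Icc 1 (n 1)
            else Finset.Icc 1 (n i) \ (Finset.Icc 1 (n (i - 1))).image (σ (i - 1))),
          ((compSeq σ i (q - i) k : ℤ) - (k : ℤ)) :=
  dSigma_sum_decomposition_general q hq n σ hσmono hσmaps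

end
end
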